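/- arXiv:1701.07064 — 7 statements merged into one kernel-verified Lean document; each statement's English description precedes it below -/
import Mathlib

section
/- Let N ≥ 2 be an integer and let χ be a nonprincipal Dirichlet character modulo N. Then the value of its Dirichlet L-function at s = 1 satisfies L(χ,1) = −(1/N)·Σ_{m=1}^{N} χ(m)·ψ(m/N), where ψ is the digamma function. -/
open Complex

/-- The digamma function `ψ = Γ'/Γ`. -/
noncomputable def digamma (x : ℝ) : ℝ := deriv Real.Gamma x / Real.Gamma x

/-!
Since `∑ χ = 0`, the Hurwitz zeta functions `ζ(s, j/N)` making up `L(χ, s)` may be replaced by the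
entire functions `ζ(s, a) - ζ(s)`. For real `s > 1` and `0 < a ≤ 1` these are the series
`∑ ((n + a)^(-s) - (n + 1)^(-s))`, dominated uniformly in `s ∈ (1, 2]`, so at `s = 1` the value is
`∑ (1/(n + a) - 1/(n + 1))`. This sum is `-γ - ψ(a)`: its partial sums are
`ψ(a + n) - ψ(n + 1) - γ - ψ(a)` by `ψ(x + 1) = ψ(x) + 1/x`, and `ψ(a + n) - ψ(n + 1) → 0` because
`ψ` is monotone (`log Γ` is convex).
-/

open Filter Topology Set HurwitzZeta

local notation "ψ" => (_root_.digamma : ℝ → ℝ)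
local notation "γ" => Real.eulerMascheroniConstant

lemma differentiableAt_Gamma_of_pos {x : ℝ} (hx : 0 < x) : DifferentiableAt ℝ Real.Gamma x :=
  Real.differentiableAt_Gamma fun m ↦ by linarith [(m.cast_nonneg : (0 : ℝ) ≤ m)]

lemma differentiableAt_log_Gamma {x : ℝ} (hx : 0 < x) :
    DifferentiableAt ℝ (Real.log ∘ Real.Gamma) x :=
  (differentiableAt_Gamma_of_pos hx).log (Real.Gamma_pos_of_pos hx).ne'

lemma digamma_eq_deriv_log_Gamma {x : ℝ} (hx : 0 < x) :
    ψ x = deriv (Real.log ∘ Real.Gamma) x := by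
  rw [_root_.digamma, Function.comp_def,
    deriv.log (differentiableAt_Gamma_of_pos hx) (Real.Gamma_pos_of_pos hx).ne']

lemma digamma_one : ψ 1 = -γ := by
  rw [_root_.digamma, Real.hasDerivAt_Gamma_one.deriv, Real.Gamma_one, div_one]

lemma digamma_add_one {x : ℝ} (hx : 0 < x) : ψ (x + 1) = ψ x + x⁻¹ := by
  have hshift : (fun y ↦ (Real.log ∘ Real.Gamma) (y + 1)) =ᶠ[𝓝 x]
      fun y ↦ (Real.log ∘ Real.Gamma) y + Real.log y := by
    filter_upwards [eventually_gt_nhds hx] with y hy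
    simp [Real.Gamma_add_one hy.ne', Real.log_mul hy.ne' (Real.Gamma_pos_of_pos hy).ne', add_comm]
  rw [digamma_eq_deriv_log_Gamma (by positivity), digamma_eq_deriv_log_Gamma hx,
    ← deriv_comp_add_const, hshift.deriv_eq, deriv_fun_add (differentiableAt_log_Gamma hx)
      (Real.differentiableAt_log hx.ne'), Real.deriv_log]

lemma digamma_add_nat {x : ℝ} (hx : 0 < x) (n : ℕ) :
    ψ (x + n) = ψ x + ∑ k ∈ Finset.range n, (x + k)⁻¹ := by
  induction n with
  | zero => simp
  | succ n ih =>
    rw [Nat.cast_succ, ← add_assoc, digamma_add_one (by positivity), ih, Finset.sum_range_succ,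
      add_assoc]

lemma monotoneOn_digamma : MonotoneOn ψ (Ioi 0) :=
  (Real.convexOn_log_Gamma.monotoneOn_deriv fun _ hx ↦ differentiableAt_log_Gamma hx).congr
    fun _ hx ↦ (digamma_eq_deriv_log_Gamma hx).symm

lemma tendsto_digamma_add_sub_digamma_add_one {x : ℝ} (hx0 : 0 < x) (hx1 : x ≤ 1) :
    Tendsto (fun n : ℕ ↦ ψ (x + n) - ψ (n + 1)) atTop (𝓝 0) := by
  rw [← tendsto_add_atTop_iff_nat 1]
  have hlower (n : ℕ) : -((n : ℝ) + 1)⁻¹ ≤ ψ (x + ↑(n + 1)) - ψ (↑(n + 1) + 1) := by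
    have h := monotoneOn_digamma (a := (n : ℝ) + 1) (b := x + ↑(n + 1)) (by simp; positivity)
      (by simp; positivity) (by push_cast; linarith)
    rw [Nat.cast_succ, digamma_add_one (by positivity)]
    push_cast at h
    linarith
  have hupper (n : ℕ) : ψ (x + ↑(n + 1)) - ψ (↑(n + 1) + 1) ≤ 0 := by
    have h := monotoneOn_digamma (a := x + ↑(n + 1)) (b := ↑(n + 1) + 1) (by simp; positivity)
      (by simp; positivity) (by push_cast; linarith)
    linarith
  refine tendsto_of_tendsto_of_tendsto_of_le_of_le ?_ tendsto_const_nhds hlower hupper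
  simpa only [one_div, neg_zero] using (tendsto_one_div_add_atTop_nhds_zero_nat (𝕜 := ℝ)).neg

lemma hasSum_inv_add_sub_inv_add_one {x : ℝ} (hx0 : 0 < x) (hx1 : x ≤ 1) :
    HasSum (fun n : ℕ ↦ (x + n)⁻¹ - ((n : ℝ) + 1)⁻¹) (-γ - ψ x) := by
  have hnonneg (n : ℕ) : 0 ≤ (x + n)⁻¹ - ((n : ℝ) + 1)⁻¹ :=
    sub_nonneg.mpr (inv_anti₀ (by positivity) (by linarith))
  have hpartial (n : ℕ) : ∑ k ∈ Finset.range n, ((x + k)⁻¹ - ((k : ℝ) + 1)⁻¹) =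
      ψ (x + n) - ψ (n + 1) + (-γ - ψ x) := by
    have h1 := digamma_add_nat one_pos n
    simp only [add_comm (1 : ℝ), _root_.digamma_one] at h1
    rw [Finset.sum_sub_distrib, ← sub_eq_iff_eq_add'.mpr (digamma_add_nat hx0 n), h1]
    ring
  rw [hasSum_iff_tendsto_nat_of_nonneg hnonneg]
  simpa [hpartial] using
    (tendsto_digamma_add_sub_digamma_add_one hx0 hx1).add_const (-γ - ψ x)

lemma rpow_neg_sub_rpow_neg_le {a b s : ℝ} (ha : 0 < a) (hab : a ≤ b) (hs : 0 ≤ s) :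
    a ^ (-s) - b ^ (-s) ≤ s * a ^ (-s - 1) * (b - a) := by
  have hderiv {t : ℝ} (ht : a ≤ t) : HasDerivAt (· ^ (-s)) (-s * t ^ (-s - 1)) t :=
    Real.hasDerivAt_rpow_const (Or.inl (ha.trans_le ht).ne')
  have hderiv_ge : ∀ t ∈ interior (Ici a), -(s * a ^ (-s - 1)) ≤ deriv (· ^ (-s)) t := by
    intro t ht
    rw [interior_Ici] at ht
    rw [(hderiv ht.le).deriv, neg_mul, neg_le_neg_iff]
    exact mul_le_mul_of_nonneg_left (Real.rpow_le_rpow_of_nonpos ha ht.le (by linarith)) hs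
  have := (convex_Ici a).mul_sub_le_image_sub_of_le_deriv
    (fun t ht ↦ (hderiv ht).continuousAt.continuousWithinAt)
    (fun t ht ↦ (hderiv (interior_subset ht : a ≤ t)).differentiableAt.differentiableWithinAt)
    hderiv_ge a self_mem_Ici b hab hab
  linarith

lemma abs_rpow_neg_sub_rpow_neg_le {x s : ℝ} (hx0 : 0 < x) (hx1 : x ≤ 1) (hs1 : 1 ≤ s)
    (hs2 : s ≤ 2) (n : ℕ) :
    |(x + n) ^ (-s) - ((n : ℝ) + 1) ^ (-s)| ≤ 2 * x ^ (-3 : ℝ) * ((n : ℝ) + 1) ^ (-2 : ℝ) := by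
  have hxn : 0 < x + n := by positivity
  have hn1 : (1 : ℝ) ≤ n + 1 := by linarith [(n.cast_nonneg : (0 : ℝ) ≤ n)]
  rw [abs_of_nonneg (sub_nonneg.mpr (Real.rpow_le_rpow_of_nonpos hxn (by linarith) (by linarith)))]
  -- `x + n ≥ x (n + 1)` turns the decay of `(x + n) ^ (-s - 1)` into decay in `n` uniformly in `s`
  have hpow : (x + n) ^ (-s - 1) ≤ x ^ (-3 : ℝ) * ((n : ℝ) + 1) ^ (-2 : ℝ) :=
    calc (x + n) ^ (-s - 1) ≤ (x * (n + 1)) ^ (-s - 1) :=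
          Real.rpow_le_rpow_of_nonpos (by positivity) (by nlinarith) (by linarith)
      _ = x ^ (-s - 1) * ((n : ℝ) + 1) ^ (-s - 1) := Real.mul_rpow hx0.le (by positivity)
      _ ≤ x ^ (-3 : ℝ) * ((n : ℝ) + 1) ^ (-2 : ℝ) :=
          mul_le_mul (Real.rpow_le_rpow_of_exponent_ge hx0 hx1 (by linarith))
            (Real.rpow_le_rpow_of_exponent_le hn1 (by linarith)) (by positivity) (by positivity)
  calc (x + n) ^ (-s) - ((n : ℝ) + 1) ^ (-s) ≤ s * (x + n) ^ (-s - 1) * (n + 1 - (x + n)) :=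
        rpow_neg_sub_rpow_neg_le hxn (by linarith) (by linarith)
    _ ≤ 2 * (x ^ (-3 : ℝ) * ((n : ℝ) + 1) ^ (-2 : ℝ)) * 1 := by
        gcongr
        · linarith
        · linarith
    _ = 2 * x ^ (-3 : ℝ) * ((n : ℝ) + 1) ^ (-2 : ℝ) := by ring

lemma summable_rpow_neg_two_add_one : Summable fun n : ℕ ↦ ((n : ℝ) + 1) ^ (-2 : ℝ) := by
  simpa using
    (summable_nat_add_iff 1).mpr (Real.summable_nat_rpow.mpr (by norm_num : (-2 : ℝ) < -1))

lemma hasSum_hurwitzZeta_sub_riemannZeta {x : ℝ} (hx : x ∈ Icc 0 1) {s : ℝ} (hs : 1 < s) :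
    HasSum (fun n : ℕ ↦ (((x + n) ^ (-s) - ((n : ℝ) + 1) ^ (-s) : ℝ) : ℂ))
      (hurwitzZeta x s - riemannZeta s) := by
  have hs' : 1 < (s : ℂ).re := by simpa using hs
  have hzeta := hasSum_hurwitzZeta_of_one_lt_re (a := 1) (by simp) hs'
  rw [show ((1 : ℝ) : UnitAddCircle) = 0 from AddCircle.coe_period 1, hurwitzZeta_zero] at hzeta
  refine ((hasSum_hurwitzZeta_of_one_lt_re hx hs').sub hzeta).congr_fun fun n ↦ ?_
  have hxn : 0 ≤ x + n := by linarith [hx.1, (n.cast_nonneg : (0 : ℝ) ≤ n)]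
  rw [ofReal_sub, Real.rpow_neg hxn, Real.rpow_neg (by positivity), ofReal_inv, ofReal_inv,
    ofReal_cpow hxn, ofReal_cpow (by positivity)]
  push_cast
  rw [add_comm (x : ℂ), one_div, one_div]

lemma tendsto_rpow_neg_nhdsGT_one {a : ℝ} (ha : 0 < a) :
    Tendsto (fun s : ℝ ↦ a ^ (-s)) (𝓝[>] 1) (𝓝 a⁻¹) := by
  have : ContinuousAt (fun s : ℝ ↦ a ^ (-s)) 1 :=
    (Real.continuousAt_const_rpow ha.ne').comp continuousAt_neg
  simpa [Real.rpow_neg_one] using this.tendsto.mono_left nhdsWithin_le_nhds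

lemma hurwitzZeta_one_sub_riemannZeta_one {x : ℝ} (hx0 : 0 < x) (hx1 : x ≤ 1) :
    hurwitzZeta x 1 - riemannZeta 1 = ((-γ - ψ x : ℝ) : ℂ) := by
  set F : ℝ → ℝ := fun s ↦ ∑' n : ℕ, ((x + n) ^ (-s) - ((n : ℝ) + 1) ^ (-s))
  have hF : Tendsto F (𝓝[>] 1) (𝓝 (-γ - ψ x)) := by
    rw [← (hasSum_inv_add_sub_inv_add_one hx0 hx1).tsum_eq]
    refine tendsto_tsum_of_dominated_convergence
      (summable_rpow_neg_two_add_one.mul_left (2 * x ^ (-3 : ℝ))) (fun n ↦ ?_) ?_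
    · exact (tendsto_rpow_neg_nhdsGT_one (by positivity)).sub
        (tendsto_rpow_neg_nhdsGT_one (by positivity))
    · filter_upwards [Ioo_mem_nhdsGT one_lt_two] with s hs n
      exact abs_rpow_neg_sub_rpow_neg_le hx0 hx1 hs.1.le hs.2.le n
  have hG : Tendsto (fun s : ℝ ↦ hurwitzZeta x s - riemannZeta s) (𝓝[>] 1)
      (𝓝 (hurwitzZeta x 1 - riemannZeta 1)) := by
    have hcont := (differentiable_hurwitzZeta_sub_hurwitzZeta x 0).continuous
    simp only [hurwitzZeta_zero] at hcont
    exact ((hcont.comp continuous_ofReal).tendsto 1).mono_left nhdsWithin_le_nhds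
  have hGF : (fun s : ℝ ↦ hurwitzZeta x s - riemannZeta s) =ᶠ[𝓝[>] 1] fun s ↦ (F s : ℂ) := by
    filter_upwards [self_mem_nhdsWithin] with s hs
    rw [ofReal_tsum, (hasSum_hurwitzZeta_sub_riemannZeta ⟨hx0.le, hx1⟩ hs).tsum_eq]
  exact tendsto_nhds_unique (hG.congr' hGF) ((continuous_ofReal.tendsto _).comp hF)

lemma ZMod.sum_eq_sum_Icc {M : Type*} [AddCommMonoid M] {N : ℕ} [NeZero N] (f : ZMod N → M) :
    ∑ j, f j = ∑ m ∈ Finset.Icc 1 N, f m := by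
  -- `(j - 1).val + 1` is the representative of `j` in `[1, N]`; the residue `0` becomes `N`
  have hcast (j : ZMod N) : (((j - 1).val + 1 : ℕ) : ZMod N) = j := by
    push_cast [ZMod.natCast_zmod_val]
    ring
  refine Finset.sum_nbij' (fun j ↦ (j - 1).val + 1) (fun m ↦ m) (fun j _ ↦ ?_)
    (fun _ _ ↦ Finset.mem_univ _) (fun j _ ↦ hcast j) (fun m hm ↦ ?_) (fun j _ ↦ by rw [hcast])
  · have := (j - 1).val_lt
    simp only [Finset.mem_Icc]
    omega
  · obtain ⟨k, rfl⟩ : ∃ k, m = k + 1 := Nat.exists_eq_add_of_le' (Finset.mem_Icc.mp hm).1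
    simp only [Nat.cast_succ, add_sub_cancel_right]
    rw [ZMod.val_natCast_of_lt (by have := (Finset.mem_Icc.mp hm).2; omega)]

theorem stmt0_general (N : ℕ) [NeZero N] (χ : DirichletCharacter ℂ N) (hχ : χ ≠ 1) :
    DirichletCharacter.LFunction χ 1 =
      -(1 / (N : ℂ)) * ∑ m ∈ Finset.Icc 1 N, χ (m : ZMod N) * (_root_.digamma (m / N) : ℂ) := by
  have hχsum : ∑ m ∈ Finset.Icc 1 N, χ (m : ZMod N) = 0 := by
    rw [← ZMod.sum_eq_sum_Icc]
    exact MulChar.sum_eq_zero_of_ne_one hχ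
  have hterm : ∀ m ∈ Finset.Icc 1 N, χ m * hurwitzZeta (ZMod.toAddCircle (m : ZMod N)) 1 =
      χ m * riemannZeta 1 - χ m * γ - χ m * ψ (m / N) := by
    intro m hm
    have hm' := Finset.mem_Icc.mp hm
    have hN : (0 : ℝ) < N := by exact_mod_cast NeZero.pos N
    have hm0 : (0 : ℝ) < m := by exact_mod_cast hm'.1
    rw [ZMod.toAddCircle_natCast, ← sub_add_cancel (hurwitzZeta _ 1) (riemannZeta 1),
      hurwitzZeta_one_sub_riemannZeta_one (div_pos hm0 hN)
        (div_le_one_of_le₀ (by exact_mod_cast hm'.2) hN.le)]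
    push_cast
    ring
  rw [DirichletCharacter.LFunction, ZMod.LFunction, ZMod.sum_eq_sum_Icc,
    Finset.sum_congr rfl hterm, Finset.sum_sub_distrib, Finset.sum_sub_distrib, ← Finset.sum_mul,
    ← Finset.sum_mul, hχsum, cpow_neg_one]
  ring

theorem stmt0 (N : ℕ) [NeZero N] (hN : 2 ≤ N) (χ : DirichletCharacter ℂ N) (hχ : χ ≠ 1) :
    DirichletCharacter.LFunction χ 1 =
      -(1 / (N : ℂ)) * ∑ m ∈ Finset.Icc 1 N, χ (m : ZMod N) * (_root_.digamma (m / N) : ℂ) :=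
  stmt0_general N χ hχ
end

section
/- The product over all primes p ≡ 1 (mod 3) satisfies ∏_{p ≡ 1 mod 3} (p² + 1)/(p² − 1) = (3/(2π²))·( ζ(2, 1/3) − ζ(2, 2/3) ). -/
/-! Comparing Euler factors, `ζ(s) L(s, χ₃) / ζ(2s)` has the factor
`(1 + p^{-s}) / (1 - p^{-s}) = (p^s + 1) / (p^s - 1)` at primes `p ≡ 1 (mod 3)`, the factor `1` at
primes `p ≡ 2 (mod 3)`, and the factor `1 + 3^{-s}` at `p = 3`. At `s = 2` one inserts
`ζ(2) = π²/6`, `ζ(4) = π⁴/90` and `9 L(2, χ₃) = ζ(2, 1/3) - ζ(2, 2/3)`. -/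

open Complex Real HurwitzZeta

noncomputable def χ₃ : DirichletCharacter ℂ 3 :=
  (quadraticChar (ZMod 3)).ringHomComp (Int.castRingHom ℂ)

lemma χ₃_natCast (n : ℕ) :
    χ₃ n = if n % 3 = 1 then 1 else if n % 3 = 2 then -1 else 0 := by
  have two_ne_zero : (2 : ZMod 3) ≠ 0 := by decide
  have two_nonsquare : ¬IsSquare (2 : ZMod 3) := by decide
  rw [← ZMod.natCast_mod n 3]
  have h : n % 3 < 3 := Nat.mod_lt n (by norm_num)
  interval_cases n % 3 <;>
    simp [χ₃, MulChar.ringHomComp_apply, quadraticChar_apply, quadraticCharFun, two_ne_zero,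
      two_nonsquare]

lemma hurwitzZeta_one_third_sub_two_thirds (s : ℂ) :
    hurwitzZeta ((1 / 3 : ℝ) : UnitAddCircle) s - hurwitzZeta ((2 / 3 : ℝ) : UnitAddCircle) s =
      3 ^ s * DirichletCharacter.LFunction χ₃ s := by
  have h3 : (3 : ℂ) ^ s * (3 : ℂ) ^ (-s) = 1 := by
    rw [← cpow_add _ _ (by norm_num), add_neg_cancel, cpow_zero]
  have hval (j : ℕ) (hj : j < 3) :
      ZMod.toAddCircle (j : ZMod 3) = ((j / 3 : ℝ) : UnitAddCircle) := by
    rw [ZMod.toAddCircle_apply, ZMod.val_natCast, Nat.mod_eq_of_lt hj]; push_cast; rfl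
  have huniv : (Finset.univ : Finset (ZMod 3)) =
      {((0 : ℕ) : ZMod 3), ((1 : ℕ) : ZMod 3), ((2 : ℕ) : ZMod 3)} := by
    decide
  simp only [DirichletCharacter.LFunction, ZMod.LFunction, huniv]
  rw [Finset.sum_insert (by decide), Finset.sum_insert (by decide), Finset.sum_singleton]
  simp only [χ₃_natCast, hval _ (by norm_num : 1 < 3), hval _ (by norm_num : 2 < 3)]
  norm_num
  rw [← mul_assoc, h3, one_mul, sub_eq_add_neg]

section NormLtOne

variable {R : Type*} [NormedRing R] [NormOneClass R] {x : R}

lemma one_sub_ne_zero_of_norm_lt_one (hx : ‖x‖ < 1) : 1 - x ≠ 0 :=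
  sub_ne_zero.mpr fun h ↦ by simp [← h] at hx

lemma one_add_ne_zero_of_norm_lt_one (hx : ‖x‖ < 1) : 1 + x ≠ 0 := by
  simpa using one_sub_ne_zero_of_norm_lt_one (x := -x) (by rwa [norm_neg])

end NormLtOne

section EulerProduct

variable {s : ℂ}

lemma norm_natCast_cpow_neg_lt_one {n : ℕ} (hn : 1 < n) (hs : 0 < s.re) :
    ‖(n : ℂ) ^ (-s)‖ < 1 := by
  rw [norm_natCast_cpow_of_pos (by omega), neg_re]
  exact Real.rpow_lt_one_of_one_lt_of_neg (by exact_mod_cast hn) (by linarith)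

lemma eulerFactor_zeta_χ₃_div_zeta_two_mul (p : Nat.Primes) (hs : 0 < s.re) :
    (1 - (p : ℂ) ^ (-s))⁻¹ * (1 - χ₃ p * (p : ℂ) ^ (-s))⁻¹ * (1 - (p : ℂ) ^ (-(2 * s))) =
      (if (p : ℕ) % 3 = 1 then ((p : ℂ) ^ s + 1) / ((p : ℂ) ^ s - 1) else 1) *
        (if (p : ℕ) = 3 then 1 + 3 ^ (-s) else 1) := by
  have hlt := norm_natCast_cpow_neg_lt_one p.prop.one_lt hs
  have hne_one := one_sub_ne_zero_of_norm_lt_one hlt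
  have hne_neg_one := one_add_ne_zero_of_norm_lt_one hlt
  have hne_zero : (p : ℂ) ^ (-s) ≠ 0 := cpow_ne_zero_iff.mpr (Or.inl (mod_cast p.prop.ne_zero))
  have h2s : (p : ℂ) ^ (-(2 * s)) = ((p : ℂ) ^ (-s)) ^ 2 := by
    rw [← cpow_nat_mul]; push_cast; ring_nf
  have hps : (p : ℂ) ^ s = ((p : ℂ) ^ (-s))⁻¹ := by rw [cpow_neg, inv_inv]
  rw [h2s, hps, χ₃_natCast]
  generalize hx : (p : ℂ) ^ (-s) = x at hne_one hne_neg_one hne_zero ⊢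
  by_cases hp3 : (p : ℕ) = 3
  · rw [hp3, Nat.cast_ofNat] at hx
    norm_num [hp3, hx]
    field_simp
    ring
  · have h : (p : ℕ) % 3 = 1 ∨ (p : ℕ) % 3 = 2 := by
      have : ¬3 ∣ (p : ℕ) := fun h ↦
        hp3 ((Nat.prime_dvd_prime_iff_eq Nat.prime_three p.prop).mp h).symm
      omega
    rcases h with h | h <;> norm_num [h, hp3] <;> field_simp <;> ring

theorem Nat.Primes.hasProd_ite_one_mod_three (hs : 1 < s.re) :
    HasProd (fun p : Nat.Primes ↦
        if (p : ℕ) % 3 = 1 then ((p : ℂ) ^ s + 1) / ((p : ℂ) ^ s - 1) else 1)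
      (riemannZeta s * DirichletCharacter.LFunction χ₃ s / riemannZeta (2 * s) /
        (1 + 3 ^ (-s))) := by
  have hζ := riemannZeta_eulerProduct_hasProd hs
  have hL := DirichletCharacter.LFunction_eq_LSeries χ₃ hs ▸ χ₃.LSeries_eulerProduct_hasProd hs
  have hζ2 := (riemannZeta_eulerProduct_hasProd (s := 2 * s) (by simp; linarith)).inv₀
    (riemannZeta_ne_zero_of_one_lt_re (by simp; linarith))
  have h3 : HasProd (fun p : Nat.Primes ↦ if (p : ℕ) = 3 then (1 + 3 ^ (-s) : ℂ) else 1)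
      (1 + 3 ^ (-s)) := by
    simpa using hasProd_single
      (f := fun p : Nat.Primes ↦ if (p : ℕ) = 3 then (1 + 3 ^ (-s) : ℂ) else 1)
      ⟨3, Nat.prime_three⟩ fun p hp ↦ if_neg fun h ↦ hp (Subtype.ext h)
  have h3_ne : (1 : ℂ) + 3 ^ (-s) ≠ 0 := by
    simpa using one_add_ne_zero_of_norm_lt_one
      (norm_natCast_cpow_neg_lt_one (n := 3) (by norm_num) (by linarith))
  refine (((hζ.mul hL).mul hζ2).div₀ h3 h3_ne).congr_fun fun p ↦ ?_
  rw [inv_inv, eulerFactor_zeta_χ₃_div_zeta_two_mul p (by linarith),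
    mul_div_cancel_right₀]
  split_ifs <;> simp [h3_ne]

theorem hasProd_primes_one_mod_three (hs : 1 < s.re) :
    HasProd (fun p : {p : ℕ // p.Prime ∧ p % 3 = 1} ↦ ((p.1 : ℂ) ^ s + 1) / ((p.1 : ℂ) ^ s - 1))
      (riemannZeta s * DirichletCharacter.LFunction χ₃ s / riemannZeta (2 * s) /
        (1 + 3 ^ (-s))) := by
  let ι : {p : ℕ // p.Prime ∧ p % 3 = 1} → Nat.Primes := fun p ↦ ⟨p.1, p.2.1⟩
  have hι : ι.Injective := fun _ _ h ↦ Subtype.ext (Subtype.mk.inj h)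
  refine ((hι.hasProd_iff fun p hp ↦ if_neg fun h ↦ hp ⟨⟨p, p.2, h⟩, rfl⟩).mpr
    (Nat.Primes.hasProd_ite_one_mod_three hs)).congr_fun fun p ↦ (if_pos p.2.2).symm

end EulerProduct

theorem stmt7 :
    (∏' p : {p : ℕ // p.Prime ∧ p % 3 = 1}, ((p.1 : ℂ) ^ 2 + 1) / ((p.1 : ℂ) ^ 2 - 1)) =
      (3 / (2 * (π : ℂ) ^ 2)) *
        (hurwitzZeta ((1 / 3 : ℝ) : UnitAddCircle) 2 - hurwitzZeta ((2 / 3 : ℝ) : UnitAddCircle) 2) := by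
  have h := (hasProd_primes_one_mod_three (s := 2) (by norm_num)).tprod_eq
  simp only [cpow_ofNat] at h
  rw [h, hurwitzZeta_one_third_sub_two_thirds, show (2 : ℂ) * 2 = 4 by norm_num, riemannZeta_two,
    riemannZeta_four, cpow_neg, cpow_ofNat]
  have hπ : (π : ℂ) ≠ 0 := ofReal_ne_zero.mpr pi_ne_zero
  field_simp
  ring
end

section
/- The product over all primes p ≡ 2 (mod 3) satisfies ∏_{p ≡ 2 mod 3} (p² + 1)/(p² − 1) = 4π² / ( 3·( ζ(2, 1/3) − ζ(2, 2/3) ) ). -/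
open Complex Real HurwitzZeta

/-!
Let `χ` be the nontrivial and `χ₀` the trivial Dirichlet character mod 3. For every prime `p`,
`(1 - χ(p) p⁻²) / (1 - χ₀(p) p⁻²)` is `(p² + 1) / (p² - 1)` when `p ≡ 2 (mod 3)` and `1`
otherwise, so by the Euler products the product equals
`L(2, χ₀) / L(2, χ) = (1 - 3⁻²) ζ(2) / L(2, χ)`. Conclude with `ζ(2) = π² / 6` and
`ζ(2, 1/3) - ζ(2, 2/3) = 3² L(2, χ)`.
-/

noncomputable def chi3 : DirichletCharacter ℂ 3 :=
  (quadraticChar (ZMod 3)).ringHomComp (Int.castRingHom ℂ)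

lemma chi3_zero : chi3 0 = 0 := by simp [chi3]

lemma chi3_one : chi3 1 = 1 := map_one _

lemma chi3_two : chi3 2 = -1 := by
  simp [chi3, show quadraticCharFun (ZMod 3) 2 = -1 from by decide]

lemma hurwitzZeta_one_third_sub_hurwitzZeta_two_thirds (s : ℂ) :
    hurwitzZeta ((1 / 3 : ℝ) : UnitAddCircle) s - hurwitzZeta ((2 / 3 : ℝ) : UnitAddCircle) s =
      3 ^ s * chi3.LFunction s := by
  have hsum : ∑ j : ZMod 3, chi3 j * hurwitzZeta (ZMod.toAddCircle j) s =
      hurwitzZeta ((1 / 3 : ℝ) : UnitAddCircle) s -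
        hurwitzZeta ((2 / 3 : ℝ) : UnitAddCircle) s := by
    rw [show (Finset.univ : Finset (ZMod 3)) = {0, 1, 2} from rfl, Finset.sum_insert (by decide),
      Finset.sum_pair (by decide), chi3_zero, chi3_one, chi3_two, ZMod.toAddCircle_apply 1,
      ZMod.toAddCircle_apply 2, show (1 : ZMod 3).val = 1 from rfl,
      show (2 : ZMod 3).val = 2 from rfl]
    push_cast
    ring
  rw [DirichletCharacter.LFunction, ZMod.LFunction, hsum, ← mul_assoc, cpow_neg, Nat.cast_ofNat,
    mul_inv_cancel₀ (cpow_ne_zero_iff.2 (.inl three_ne_zero)), one_mul]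

theorem DirichletCharacter.LSeries_div_LSeries_hasProd {N : ℕ} (χ ψ : DirichletCharacter ℂ N)
    {s : ℂ} (hs : 1 < s.re) :
    HasProd (fun p : Nat.Primes ↦ (1 - ψ p * (p : ℂ) ^ (-s)) / (1 - χ p * (p : ℂ) ^ (-s)))
      (LSeries (χ ·) s / LSeries (ψ ·) s) := by
  simpa only [inv_div_inv] using (χ.LSeries_eulerProduct_hasProd hs).div₀
    (ψ.LSeries_eulerProduct_hasProd hs) (ψ.LSeries_ne_zero_of_one_lt_re hs)

lemma mulIndicator_mod_three_eq_two_eq_eulerFactor_div (p : Nat.Primes) :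
    Set.mulIndicator {p : Nat.Primes | (p : ℕ) % 3 = 2}
        (fun p ↦ ((p : ℂ) ^ 2 + 1) / ((p : ℂ) ^ 2 - 1)) p =
      (1 - chi3 p * (p : ℂ) ^ (-2 : ℂ)) /
        (1 - (1 : DirichletCharacter ℂ 3) p * (p : ℂ) ^ (-2 : ℂ)) := by
  have hp0 : (p : ℂ) ≠ 0 := Nat.cast_ne_zero.2 p.2.ne_zero
  have hp1 : (p : ℂ) ^ 2 ≠ 1 := by exact_mod_cast (Nat.one_lt_pow two_ne_zero p.2.one_lt).ne'
  rw [cpow_neg, cpow_ofNat, ← ZMod.natCast_mod]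
  rcases (show (p : ℕ) % 3 = 0 ∨ (p : ℕ) % 3 = 1 ∨ (p : ℕ) % 3 = 2 by omega) with h | h | h
  · rw [Set.mulIndicator_of_notMem (by simp [h]), h, Nat.cast_zero, chi3_zero, MulChar.map_zero]
    simp
  · rw [Set.mulIndicator_of_notMem (by simp [h]), h, Nat.cast_one, chi3_one, map_one, one_mul,
      div_self (sub_ne_zero.2 (inv_ne_one.2 hp1).symm)]
  · rw [Set.mulIndicator_of_mem (by simp [h]), h, Nat.cast_ofNat, chi3_two,
      MulChar.one_apply (IsUnit.of_mul_eq_one 2 rfl)]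
    field_simp
    ring

theorem stmt8 :
    (∏' p : {p : ℕ // p.Prime ∧ p % 3 = 2}, ((p.1 : ℂ) ^ 2 + 1) / ((p.1 : ℂ) ^ 2 - 1)) =
      4 * (π : ℂ) ^ 2 /
        (3 * (hurwitzZeta ((1 / 3 : ℝ) : UnitAddCircle) 2
          - hurwitzZeta ((2 / 3 : ℝ) : UnitAddCircle) 2)) := by
  have hs : 1 < (2 : ℂ).re := by norm_num
  have hprimes := (DirichletCharacter.LSeries_div_LSeries_hasProd 1 chi3 hs).congr_fun
    mulIndicator_mod_three_eq_two_eq_eulerFactor_div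
  have hprod : HasProd (fun p : {p : ℕ // p.Prime ∧ p % 3 = 2} ↦
      ((p.1 : ℂ) ^ 2 + 1) / ((p.1 : ℂ) ^ 2 - 1)) _ :=
    (Equiv.subtypeSubtypeEquivSubtypeInter Nat.Prime (· % 3 = 2)).hasProd_iff.1
      (hasProd_subtype_iff_mulIndicator.2 hprimes)
  have hζ : (1 : DirichletCharacter ℂ 3).LFunction 2 = (1 - 3 ^ (-2 : ℂ)) * riemannZeta 2 := by
    simpa [Nat.prime_three.primeFactors] using
      DirichletCharacter.LFunctionTrivChar_eq_mul_riemannZeta (N := 3) (s := 2) (by norm_num)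
  have hL : chi3.LFunction 2 ≠ 0 := by
    rw [DirichletCharacter.LFunction_eq_LSeries _ hs]
    exact chi3.LSeries_ne_zero_of_one_lt_re hs
  rw [hprod.tprod_eq, hurwitzZeta_one_third_sub_hurwitzZeta_two_thirds,
    ← DirichletCharacter.LFunction_eq_LSeries _ hs, ← DirichletCharacter.LFunction_eq_LSeries _ hs,
    hζ, riemannZeta_two]
  field_simp
  norm_num [cpow_neg]
end

section
/- (7/8)·ζ(3)·∏_{p ≡ 5,7 mod 8} (p³ − 1)/(p³ + 1) = 3π³/(64√2). -/
/-!
Dividing the Euler product of `L(χ₈', 3)` by that of `ζ(3)` leaves the local factors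
`(1 - p⁻³) / (1 - χ₈'(p) p⁻³)`, which are `7/8` at `p = 2`, `1` at `p ≡ 1, 3 mod 8` and
`(p³ - 1) / (p³ + 1)` at `p ≡ 5, 7 mod 8`. For the value of `L(χ₈', 3)`, write
`√2 χ₈'(n) = sin(πn/4) + sin(3πn/4)` and evaluate the Fourier series
`∑ sin(2πnx) / n³ = (2π³/3) B₃(x)` at `x = 1/8` and `x = 3/8`.
-/

open Complex Real
open scoped LSeries.notation

theorem DirichletCharacter.hasProd_eulerFactor_div_riemannZeta {N : ℕ}
    (χ : DirichletCharacter ℂ N) {s : ℂ} (hs : 1 < s.re) :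
    HasProd (fun p : Nat.Primes ↦ (1 - (p : ℂ) ^ (-s)) / (1 - χ p * (p : ℂ) ^ (-s)))
      (L ↗χ s / riemannZeta s) := by
  simpa only [inv_div_inv] using (χ.LSeries_eulerProduct_hasProd hs).div₀
    (riemannZeta_eulerProduct_hasProd hs) (riemannZeta_ne_zero_of_one_lt_re hs)

lemma Polynomial.aeval_bernoulli_three (x : ℝ) :
    aeval x (bernoulli 3) = x ^ 3 - 3 / 2 * x ^ 2 + 1 / 2 * x := by
  norm_num [Polynomial.bernoulli, Finset.sum_range_succ, bernoulli_eq_bernoulli'_of_ne_one,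
    bernoulli'_two, bernoulli'_three, sub_eq_add_neg, add_comm, add_left_comm]

lemma ZMod.χ₈'_add_four (a : ZMod 8) : χ₈' (a + 4) = -χ₈' a := by
  revert a
  decide

lemma sin_add_sin_three_eighths_add_four (x : ℝ) :
    Real.sin (2 * π * (x + 4) * (1 / 8)) + Real.sin (2 * π * (x + 4) * (3 / 8)) =
      -(Real.sin (2 * π * x * (1 / 8)) + Real.sin (2 * π * x * (3 / 8))) := by
  rw [show 2 * π * (x + 4) * (1 / 8) = 2 * π * x * (1 / 8) + π by ring,
    show 2 * π * (x + 4) * (3 / 8) = 2 * π * x * (3 / 8) + π + 2 * π by ring,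
    Real.sin_add_two_pi, Real.sin_add_pi, Real.sin_add_pi, neg_add]

lemma sin_add_sin_three_eighths_eq_sqrt_two_mul_χ₈' (n : ℕ) :
    Real.sin (2 * π * n * (1 / 8)) + Real.sin (2 * π * n * (3 / 8)) = √2 * ZMod.χ₈' n := by
  induction n using Nat.strong_induction_on with
  | _ n ih =>
    rcases lt_or_ge n 4 with hn | hn
    · have h34 : Real.sin (3 * π / 4) = √2 / 2 := by
        rw [show 3 * π / 4 = π - π / 4 by ring, Real.sin_pi_sub, Real.sin_pi_div_four]
      interval_cases n
      · simp
      · rw [show 2 * π * (1 : ℕ) * (1 / 8) = π / 4 by push_cast; ring,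
          show 2 * π * (1 : ℕ) * (3 / 8) = 3 * π / 4 by push_cast; ring, Real.sin_pi_div_four, h34]
        norm_num [ZMod.χ₈'_nat_eq_if_mod_eight]
      · rw [show 2 * π * (2 : ℕ) * (1 / 8) = π / 2 by push_cast; ring,
          show 2 * π * (2 : ℕ) * (3 / 8) = π / 2 + π by push_cast; ring, Real.sin_add_pi]
        norm_num [ZMod.χ₈'_nat_eq_if_mod_eight]
      · rw [show 2 * π * (3 : ℕ) * (1 / 8) = 3 * π / 4 by push_cast; ring,
          show 2 * π * (3 : ℕ) * (3 / 8) = π / 4 + 2 * π by push_cast; ring, Real.sin_add_two_pi,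
          Real.sin_pi_div_four, h34]
        norm_num [ZMod.χ₈'_nat_eq_if_mod_eight]
    · obtain ⟨m, rfl⟩ := Nat.exists_eq_add_of_le' hn
      have hcast : ((m + 4 : ℕ) : ZMod 8) = (m : ZMod 8) + 4 := by push_cast; rfl
      rw [Nat.cast_add, Nat.cast_ofNat, sin_add_sin_three_eighths_add_four, ih m (by omega),
        hcast, ZMod.χ₈'_add_four]
      push_cast
      ring

noncomputable def χ₈'ℂ : DirichletCharacter ℂ 8 := ZMod.χ₈'.ringHomComp (Int.castRingHom ℂ)

lemma χ₈'ℂ_natCast (n : ℕ) : χ₈'ℂ n = ZMod.χ₈' n := rfl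

lemma LSeries_χ₈'ℂ_three : L ↗χ₈'ℂ 3 = ((3 * π ^ 3 / (64 * √2) : ℝ) : ℂ) := by
  have h₁ := hasSum_one_div_nat_pow_mul_sin one_ne_zero (x := 1 / 8) ⟨by norm_num, by norm_num⟩
  have h₃ := hasSum_one_div_nat_pow_mul_sin one_ne_zero (x := 3 / 8) ⟨by norm_num, by norm_num⟩
  have hsum := Complex.hasSum_ofReal.mpr ((h₁.add h₃).mul_left (√2)⁻¹)
  have hterm (n : ℕ) : (((√2)⁻¹ * (1 / (n : ℝ) ^ (2 * 1 + 1) * Real.sin (2 * π * n * (1 / 8)) +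
      1 / (n : ℝ) ^ (2 * 1 + 1) * Real.sin (2 * π * n * (3 / 8))) : ℝ) : ℂ) =
      LSeries.term ↗χ₈'ℂ 3 n := by
    rcases eq_or_ne n 0 with rfl | hn
    · simp
    rw [LSeries.term_of_ne_zero hn, ← mul_add, sin_add_sin_three_eighths_eq_sqrt_two_mul_χ₈',
      χ₈'ℂ_natCast, show (3 : ℂ) = (3 : ℕ) by norm_num, cpow_natCast]
    push_cast
    field_simp
  rw [funext hterm] at hsum
  rw [LSeries, hsum.tsum_eq]
  congr 1
  norm_num [Polynomial.aeval_bernoulli_three, Nat.factorial]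
  field_simp
  ring

def primesFiveSevenModEight : Set Nat.Primes := {p | (p : ℕ) % 8 = 5 ∨ (p : ℕ) % 8 = 7}

lemma eulerFactor_div_χ₈'ℂ_three (p : Nat.Primes) :
    (1 - (p : ℂ) ^ (-3 : ℂ)) / (1 - χ₈'ℂ p * (p : ℂ) ^ (-3 : ℂ)) =
      (if (p : ℕ) = 2 then 7 / 8 else 1) *
        primesFiveSevenModEight.mulIndicator (fun q ↦ ((q : ℂ) ^ 3 - 1) / ((q : ℂ) ^ 3 + 1)) p := by
  rw [show (-3 : ℂ) = -(3 : ℕ) by norm_num, cpow_neg, cpow_natCast, χ₈'ℂ_natCast,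
    ZMod.χ₈'_nat_eq_if_mod_eight]
  rcases eq_or_ne (p : ℕ) 2 with h2 | h2
  · rw [Set.mulIndicator_of_notMem (by simp [primesFiveSevenModEight, h2])]
    norm_num [h2]
  have hodd : (p : ℕ) % 2 = 1 := Nat.odd_iff.mp (p.2.odd_of_ne_two h2)
  have hcube : 8 ≤ (p : ℕ) ^ 3 := Nat.pow_le_pow_left p.2.two_le 3
  have h0 : (p : ℂ) ^ 3 ≠ 0 := by exact_mod_cast (by omega : (p : ℕ) ^ 3 ≠ 0)
  have h1 : (p : ℂ) ^ 3 ≠ 1 := by exact_mod_cast (by omega : (p : ℕ) ^ 3 ≠ 1)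
  rw [if_neg h2, if_neg (by omega), one_mul]
  by_cases hS : p ∈ primesFiveSevenModEight
  · rw [Set.mulIndicator_of_mem hS, if_neg (by rcases hS with h | h <;> omega)]
    generalize (p : ℂ) ^ 3 = x at *
    rw [Int.cast_neg, Int.cast_one, neg_one_mul, sub_neg_eq_add, ← mul_div_mul_left _ _ h0,
      mul_sub, mul_add, mul_one, mul_inv_cancel₀ h0]
  · rw [Set.mulIndicator_of_notMem hS, if_pos (by obtain ⟨h5, h7⟩ := not_or.mp hS; omega)]
    generalize (p : ℂ) ^ 3 = x at *
    rw [Int.cast_one, one_mul, div_self (sub_ne_zero.mpr (inv_ne_one.mpr h1).symm)]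

lemma hasProd_mulIndicator_primesFiveSevenModEight :
    HasProd (primesFiveSevenModEight.mulIndicator fun q ↦ ((q : ℂ) ^ 3 - 1) / ((q : ℂ) ^ 3 + 1))
      (L ↗χ₈'ℂ 3 / riemannZeta 3 / (7 / 8)) := by
  have hfactor_two : HasProd (fun p : Nat.Primes ↦ if (p : ℕ) = 2 then (7 / 8 : ℂ) else 1)
      (7 / 8) := by
    simpa using hasProd_single (f := fun p : Nat.Primes ↦ if (p : ℕ) = 2 then (7 / 8 : ℂ) else 1)
      ⟨2, Nat.prime_two⟩ fun p hp ↦ if_neg fun h ↦ hp (Subtype.ext h)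
  have hfactor_two_ne (p : Nat.Primes) : (if (p : ℕ) = 2 then (7 / 8 : ℂ) else 1) ≠ 0 := by
    split_ifs <;> norm_num
  have hprod := (χ₈'ℂ.hasProd_eulerFactor_div_riemannZeta (s := 3) (by norm_num)).div₀
    hfactor_two (by norm_num)
  simpa only [eulerFactor_div_χ₈'ℂ_three, mul_div_cancel_left₀ _ (hfactor_two_ne _)] using hprod

theorem stmt12 :
    (7 / 8) * riemannZeta 3 *
        ∏' p : {p : ℕ // p.Prime ∧ (p % 8 = 5 ∨ p % 8 = 7)},
          ((p.1 : ℂ) ^ 3 - 1) / ((p.1 : ℂ) ^ 3 + 1) =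
      ((3 * π ^ 3 / (64 * Real.sqrt 2) : ℝ) : ℂ) := by
  have hζ : riemannZeta 3 ≠ 0 := riemannZeta_ne_zero_of_one_lt_re (by norm_num)
  have hprod : ∏' p : {p : ℕ // p.Prime ∧ (p % 8 = 5 ∨ p % 8 = 7)},
      ((p.1 : ℂ) ^ 3 - 1) / ((p.1 : ℂ) ^ 3 + 1) = L ↗χ₈'ℂ 3 / riemannZeta 3 / (7 / 8) :=
    ((Equiv.subtypeSubtypeEquivSubtypeInter _ _).tprod_eq _).symm.trans
      ((tprod_subtype _ _).trans hasProd_mulIndicator_primesFiveSevenModEight.tprod_eq)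
  rw [hprod, LSeries_χ₈'ℂ_three]
  field_simp
end

section
/- 6·ζ(2)·∏_{p ≡ 3,5 mod 8} (p² − 1)/(p² + 1) = π²/√2. -/
/-!
Comparing Euler factors, `ζ(s) ∏_{p ≡ ±3 (8)} (1 - p⁻ˢ)/(1 + p⁻ˢ) = (1 - 2⁻ˢ)⁻¹ L(χ₈, s)`, because
`χ₈(2) = 0`, `χ₈(p) = 1` for `p ≡ ±1` and `χ₈(p) = -1` for `p ≡ ±3 (mod 8)`. For the value at
`s = 2`, the finite Fourier expansion `√2 χ₈(n) = cos(πn/4) - cos(3πn/4)` turns `L(χ₈, 2)` into a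
difference of the series `∑ cos(2πnx)/n² = π² B₂(x)` at `x = 1/8` and `x = 3/8`, which gives
`L(χ₈, 2) = π²/(8√2)`. Hence the left-hand side is `6 · (4/3) · π²/(8√2) = π²/√2`.
-/

open Complex Real
open scoped LSeries.notation

theorem cos_pi_mul_div_four_mod (m : ℕ) :
    Real.cos (π * m / 4) = Real.cos (π * (m % 8 : ℕ) / 4) := by
  conv_lhs => rw [← Nat.mod_add_div m 8]
  push_cast
  rw [show π * ((m % 8 : ℕ) + 8 * (m / 8 : ℕ)) / 4 = π * (m % 8 : ℕ) / 4 + (m / 8 : ℕ) * (2 * π)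
    by ring, Real.cos_add_nat_mul_two_pi]

theorem sqrt_two_mul_χ₈_nat (n : ℕ) :
    √2 * ZMod.χ₈ n = Real.cos (π * n / 4) - Real.cos (π * (3 * n : ℕ) / 4) := by
  have h2 : Real.cos (π * 2 / 4) = 0 := by
    rw [show π * 2 / 4 = π / 2 by ring, Real.cos_pi_div_two]
  have h3 : Real.cos (π * 3 / 4) = -(√2 / 2) := by
    rw [show π * 3 / 4 = π - π / 4 by ring, Real.cos_pi_sub, Real.cos_pi_div_four]
  have h5 : Real.cos (π * 5 / 4) = -(√2 / 2) := by
    rw [show π * 5 / 4 = π / 4 + π by ring, Real.cos_add_pi, Real.cos_pi_div_four]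
  have h6 : Real.cos (π * 6 / 4) = 0 := by
    rw [show π * 6 / 4 = π / 2 + π by ring, Real.cos_add_pi, Real.cos_pi_div_two, neg_zero]
  have h7 : Real.cos (π * 7 / 4) = √2 / 2 := by
    rw [show π * 7 / 4 = 2 * π - π / 4 by ring, Real.cos_two_pi_sub, Real.cos_pi_div_four]
  rw [cos_pi_mul_div_four_mod n, cos_pi_mul_div_four_mod (3 * n), ZMod.χ₈_nat_mod_eight,
    Nat.mul_mod]
  have hlt : n % 8 < 8 := Nat.mod_lt n (by norm_num)
  interval_cases n % 8 <;> norm_num [h2, h3, h5, h6, h7, Real.cos_pi_div_four] <;> ring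

theorem hasSum_χ₈_div_sq :
    HasSum (fun n : ℕ => (ZMod.χ₈ n : ℝ) / n ^ 2) (π ^ 2 / (8 * √2)) := by
  have h1 := hasSum_one_div_nat_pow_mul_cos one_ne_zero (x := 1 / 8) ⟨by norm_num, by norm_num⟩
  have h3 := hasSum_one_div_nat_pow_mul_cos one_ne_zero (x := 3 / 8) ⟨by norm_num, by norm_num⟩
  rw [← bernoulliFun, Nat.mul_one, bernoulliFun_two] at h1 h3
  refine (congrArg₂ (HasSum · ·) ?_ ?_).mpr ((h1.sub h3).div_const √2)
  · funext n
    rw [eq_div_iff (by positivity), div_mul_eq_mul_div, mul_comm, sqrt_two_mul_χ₈_nat]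
    push_cast
    ring_nf
  · field_simp
    ring

noncomputable def χ₈ℂ : DirichletCharacter ℂ 8 := ZMod.χ₈.ringHomComp (Int.castRingHom ℂ)

theorem χ₈ℂ_apply (a : ZMod 8) : χ₈ℂ a = ZMod.χ₈ a := rfl

theorem LSeries_χ₈ℂ_two : L ↗χ₈ℂ 2 = ((π ^ 2 / (8 * √2) : ℝ) : ℂ) := by
  refine HasSum.tsum_eq ?_
  convert Complex.hasSum_ofReal.mpr hasSum_χ₈_div_sq with n
  rw [LSeries.term_of_ne_zero' two_ne_zero, cpow_ofNat]
  push_cast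
  rfl

theorem natCast_cpow_neg_ne_one {n : ℕ} (hn : 1 < n) {s : ℂ} (hs : 0 < s.re) :
    (n : ℂ) ^ (-s) ≠ 1 := by
  intro h
  have hnorm := congrArg norm h
  rw [norm_natCast_cpow_of_pos (by omega), neg_re, norm_one] at hnorm
  exact (Real.rpow_lt_one_of_one_lt_of_neg (by exact_mod_cast hn) (by linarith)).ne hnorm

theorem χ₈ℂ_eulerFactor_ratio {p : ℕ} (hp : p.Prime) {s : ℂ} (hs : 0 < s.re) :
    (1 - (p : ℂ) ^ (-s)) * (if p = 2 then (1 - 2 ^ (-s))⁻¹ else 1) *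
        (1 - χ₈ℂ p * (p : ℂ) ^ (-s))⁻¹ =
      if p % 8 = 3 ∨ p % 8 = 5 then (1 - (p : ℂ) ^ (-s)) / (1 + (p : ℂ) ^ (-s)) else 1 := by
  have hne : 1 - (p : ℂ) ^ (-s) ≠ 0 := sub_ne_zero.mpr (natCast_cpow_neg_ne_one hp.one_lt hs).symm
  rw [χ₈ℂ_apply, ZMod.χ₈_nat_eq_if_mod_eight]
  rcases hp.eq_two_or_odd with rfl | hodd
  · simpa using mul_inv_cancel₀ hne
  have hodd8 : p % 8 % 2 = 1 := by rw [Nat.mod_mod_of_dvd p (by norm_num : 2 ∣ 8)]; exact hodd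
  rw [if_neg (by omega), if_neg (by omega), mul_one]
  by_cases h35 : p % 8 = 3 ∨ p % 8 = 5
  · rw [if_pos h35, if_neg (by omega), Int.cast_neg, Int.cast_one, neg_one_mul, sub_neg_eq_add,
      div_eq_mul_inv]
  · rw [if_neg h35, if_pos (by omega), Int.cast_one, one_mul, mul_inv_cancel₀ hne]

theorem hasProd_χ₈ℂ_eulerFactor_ratio {s : ℂ} (hs : 1 < s.re) :
    HasProd (fun p : {p : ℕ // p.Prime ∧ (p % 8 = 3 ∨ p % 8 = 5)} =>
        (1 - (p.1 : ℂ) ^ (-s)) / (1 + (p.1 : ℂ) ^ (-s)))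
      ((riemannZeta s)⁻¹ * (1 - 2 ^ (-s))⁻¹ * L ↗χ₈ℂ s) := by
  have hζ := (riemannZeta_eulerProduct_hasProd hs).inv₀ (riemannZeta_ne_zero_of_one_lt_re hs)
  have h2 : HasProd (fun p : Nat.Primes => if (p : ℕ) = 2 then (1 - (2 : ℂ) ^ (-s))⁻¹ else 1)
      (1 - 2 ^ (-s))⁻¹ :=
    hasProd_single (f := fun p : Nat.Primes => if (p : ℕ) = 2 then (1 - (2 : ℂ) ^ (-s))⁻¹ else 1)
      ⟨2, Nat.prime_two⟩ fun q hq => if_neg fun h => hq (Subtype.ext h)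
  have h := (hζ.mul h2).mul (χ₈ℂ.LSeries_eulerProduct_hasProd hs)
  simp only [inv_inv, fun p : Nat.Primes => χ₈ℂ_eulerFactor_ratio p.2 (zero_lt_one.trans hs)] at h
  let ι : {p : ℕ // p.Prime ∧ (p % 8 = 3 ∨ p % 8 = 5)} → Nat.Primes := fun p => ⟨p.1, p.2.1⟩
  have hι : Function.Injective ι := fun p q hpq => Subtype.ext (congrArg Subtype.val hpq :)
  have hone : ∀ p ∉ Set.range ι, (if (p : ℕ) % 8 = 3 ∨ (p : ℕ) % 8 = 5 then
      (1 - (p : ℂ) ^ (-s)) / (1 + (p : ℂ) ^ (-s)) else 1) = 1 :=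
    fun p hp => if_neg fun h35 => hp ⟨⟨p, p.2, h35⟩, rfl⟩
  exact ((hι.hasProd_iff hone).mpr h).congr_fun fun p => (if_pos p.2.2).symm

theorem stmt13 :
    6 * riemannZeta 2 *
        ∏' p : {p : ℕ // p.Prime ∧ (p % 8 = 3 ∨ p % 8 = 5)},
          ((p.1 : ℂ) ^ 2 - 1) / ((p.1 : ℂ) ^ 2 + 1) =
      ((π ^ 2 / Real.sqrt 2 : ℝ) : ℂ) := by
  have hs : 1 < (2 : ℂ).re := by norm_num
  have hfactor (p : {p : ℕ // p.Prime ∧ (p % 8 = 3 ∨ p % 8 = 5)}) :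
      ((p.1 : ℂ) ^ 2 - 1) / ((p.1 : ℂ) ^ 2 + 1) =
        (1 - (p.1 : ℂ) ^ (-2 : ℂ)) / (1 + (p.1 : ℂ) ^ (-2 : ℂ)) := by
    have hp : (p.1 : ℂ) ≠ 0 := by exact_mod_cast p.2.1.ne_zero
    rw [cpow_neg, cpow_ofNat]
    field_simp
  rw [tprod_congr hfactor, (hasProd_χ₈ℂ_eulerFactor_ratio hs).tprod_eq, LSeries_χ₈ℂ_two,
    ← mul_assoc, ← mul_assoc, mul_assoc 6, mul_inv_cancel₀ (riemannZeta_ne_zero_of_one_lt_re hs),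
    cpow_neg, cpow_ofNat]
  push_cast
  field_simp
  ring
end

section
/- For every real s with 0 < s < 1, the value ζ(s) of the Riemann zeta function is real and strictly negative. -/
open Complex

/-!
Grouped in pairs, the alternating series `η(s) = ∑ (-1)ⁿ (n + 1)^(-s)` becomes
`∑ₖ ((2k + 1)^(-s) - (2k + 2)^(-s))`, whose terms are `O(‖s‖ k^(-re s - 1))` by the mean value
theorem; so it converges locally uniformly and is holomorphic on `re s > 0`. For `re s > 1`,
splitting `ζ(s)` into odd and even terms gives `η(s) = (1 - 2^(1-s)) ζ(s)`, and by analytic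
continuation this persists for `re s > 0`, `s ≠ 1`. For real `s ∈ (0, 1)` every pair is positive,
so `η(s) > 0`, while `1 - 2^(1-s) < 0`; hence `ζ(s) < 0`. That `ζ(s)` is real follows from
`ζ(s̄) = conj ζ(s)`.
-/

lemma norm_ofReal_cpow_neg_sub_le {a b : ℝ} (ha : 0 < a) (hab : a ≤ b) {s : ℂ}
    (hs : -1 ≤ s.re) :
    ‖(a : ℂ) ^ (-s) - (b : ℂ) ^ (-s)‖ ≤ ‖s‖ * a ^ (-s.re - 1) * (b - a) := by
  rcases eq_or_ne s 0 with rfl | hs0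
  · simp
  have hderiv : ∀ x ∈ Set.Icc a b, HasDerivWithinAt (fun y : ℝ ↦ (y : ℂ) ^ (-s))
      (-s * (x : ℂ) ^ (-s - 1)) (Set.Icc a b) x := fun x hx ↦
    (hasDerivAt_ofReal_cpow_const (ha.trans_le hx.1).ne' (neg_ne_zero.2 hs0)).hasDerivWithinAt
  have hbound : ∀ x ∈ Set.Icc a b, ‖-s * (x : ℂ) ^ (-s - 1)‖ ≤ ‖s‖ * a ^ (-s.re - 1) := by
    intro x hx
    rw [norm_mul, norm_neg, norm_cpow_eq_rpow_re_of_pos (ha.trans_le hx.1)]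
    gcongr
    simpa using Real.rpow_le_rpow_of_nonpos ha hx.1 (by linarith)
  have := Convex.norm_image_sub_le_of_norm_hasDerivWithin_le hderiv hbound (convex_Icc a b)
      (Set.left_mem_Icc.2 hab) (Set.right_mem_Icc.2 hab)
  rwa [norm_sub_rev, Real.norm_of_nonneg (sub_nonneg.2 hab)] at this

noncomputable def etaTerm (s : ℂ) (k : ℕ) : ℂ :=
  ((2 * k + 1 : ℕ) : ℂ) ^ (-s) - ((2 * k + 2 : ℕ) : ℂ) ^ (-s)

noncomputable def dirichletEta (s : ℂ) : ℂ := ∑' k, etaTerm s k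

lemma norm_etaTerm_le (k : ℕ) {s : ℂ} (hs : -1 ≤ s.re) :
    ‖etaTerm s k‖ ≤ ‖s‖ * ((k : ℝ) + 1) ^ (-s.re - 1) := by
  have h := norm_ofReal_cpow_neg_sub_le (a := 2 * k + 1) (b := 2 * k + 2) (by positivity)
    (by linarith) hs
  have hk : ((2 * k + 1 : ℝ)) ^ (-s.re - 1) ≤ ((k : ℝ) + 1) ^ (-s.re - 1) :=
    Real.rpow_le_rpow_of_nonpos (by positivity) (by linarith [(k.cast_nonneg : (0 : ℝ) ≤ k)])
      (by linarith)
  calc ‖etaTerm s k‖ ≤ ‖s‖ * (2 * k + 1 : ℝ) ^ (-s.re - 1) * ((2 * k + 2) - (2 * k + 1)) := by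
        simpa [etaTerm] using h
    _ ≤ ‖s‖ * ((k : ℝ) + 1) ^ (-s.re - 1) := by
        rw [show (2 * k + 2 : ℝ) - (2 * k + 1) = 1 by ring, mul_one]
        gcongr

lemma summable_rpow_nat_add_one {c : ℝ} (hc : 0 < c) :
    Summable (fun k : ℕ ↦ ((k : ℝ) + 1) ^ (-c - 1)) := by
  simpa using (summable_nat_add_iff 1).2 (Real.summable_nat_rpow.2 (by linarith : -c - 1 < -1))

lemma summable_norm_etaTerm {s : ℂ} (hs : 0 < s.re) : Summable (fun k ↦ ‖etaTerm s k‖) :=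
  .of_nonneg_of_le (fun _ ↦ norm_nonneg _) (fun k ↦ norm_etaTerm_le k (by linarith))
    ((summable_rpow_nat_add_one hs).mul_left _)

lemma differentiable_etaTerm (k : ℕ) : Differentiable ℂ (etaTerm · k) := by
  unfold etaTerm
  fun_prop (disch := exact Or.inl (Nat.cast_ne_zero.2 (by omega)))

lemma differentiableOn_dirichletEta_of_lt_re {ε : ℝ} (hε : 0 < ε) (R : ℝ) :
    DifferentiableOn ℂ dirichletEta ({s | ε < s.re} ∩ Metric.ball 0 R) := by
  refine differentiableOn_tsum_of_summable_norm
    ((summable_rpow_nat_add_one hε).mul_left R)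
    (fun k ↦ (differentiable_etaTerm k).differentiableOn)
    ((isOpen_lt continuous_const continuous_re).inter Metric.isOpen_ball) ?_
  rintro k w ⟨hεw, hwR⟩
  replace hεw : ε < w.re := hεw
  rw [mem_ball_zero_iff] at hwR
  refine (norm_etaTerm_le k (by linarith)).trans ?_
  gcongr
  · exact (norm_nonneg w).trans hwR.le
  · linarith

lemma differentiableOn_dirichletEta : DifferentiableOn ℂ dirichletEta {s | 0 < s.re} := by
  refine differentiableOn_of_locally_differentiableOn fun s hs ↦ ?_
  replace hs : 0 < s.re := hs
  refine ⟨{w | s.re / 2 < w.re} ∩ Metric.ball 0 (‖s‖ + 1),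
    (isOpen_lt continuous_const continuous_re).inter Metric.isOpen_ball,
    ⟨half_lt_self hs, by simp⟩, ?_⟩
  exact (differentiableOn_dirichletEta_of_lt_re (half_pos hs) _).mono Set.inter_subset_right

lemma tsum_even_sub_odd {E : Type*} [NormedAddCommGroup E] [CompleteSpace E] {f : ℕ → E}
    (hf : Summable f) :
    ∑' k, (f (2 * k) - f (2 * k + 1)) = ∑' n, f n - 2 • ∑' k, f (2 * k + 1) := by
  have he : Summable (fun k ↦ f (2 * k)) := hf.comp_injective (mul_right_injective₀ two_ne_zero)
  have ho : Summable (fun k ↦ f (2 * k + 1)) :=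
    hf.comp_injective ((add_left_injective 1).comp (mul_right_injective₀ two_ne_zero))
  rw [he.tsum_sub ho, ← tsum_even_add_odd he ho, two_nsmul]
  abel

lemma dirichletEta_eq_of_one_lt_re {s : ℂ} (hs : 1 < s.re) :
    dirichletEta s = (1 - 2 ^ (1 - s)) * riemannZeta s := by
  set f : ℕ → ℂ := fun n ↦ ((n + 1 : ℕ) : ℂ) ^ (-s)
  have hζ : riemannZeta s = ∑' n, f n := by
    rw [zeta_eq_tsum_one_div_nat_add_one_cpow hs]
    simp [f, cpow_neg]
  have hf : Summable f := (summable_nat_add_iff (f := fun n : ℕ ↦ (n : ℂ) ^ (-s)) 1).2 <| by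
    simpa [cpow_neg] using Complex.summable_one_div_nat_cpow.2 hs
  have hodd : ∀ k, f (2 * k + 1) = 2 ^ (-s) * f k := fun k ↦ by
    simp only [f, show 2 * k + 1 + 1 = 2 * (k + 1) by ring, Nat.cast_mul, natCast_mul_natCast_cpow]
    norm_num
  have h2 : (2 : ℂ) ^ (1 - s) = 2 * 2 ^ (-s) := by
    rw [sub_eq_add_neg, cpow_add _ _ two_ne_zero, cpow_one]
  rw [dirichletEta, show etaTerm s = fun k ↦ f (2 * k) - f (2 * k + 1) from rfl,
    tsum_even_sub_odd hf]
  simp only [hodd, tsum_mul_left, ← hζ, h2, nsmul_eq_mul, Nat.cast_ofNat]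
  ring

/-- Multiplying by `s - 1` removes the pole of `ζ`, so the identity theorem applies on the whole
convex half-plane. -/
lemma sub_one_mul_dirichletEta {s : ℂ} (hs : 0 < s.re) :
    (s - 1) * dirichletEta s = (1 - 2 ^ (1 - s)) * riemannZeta₁ s := by
  have hU : IsOpen {s : ℂ | 0 < s.re} := isOpen_lt continuous_const continuous_re
  have hf : AnalyticOnNhd ℂ (fun s ↦ (s - 1) * dirichletEta s) {s | 0 < s.re} :=
    ((differentiableOn_id.sub_const 1).mul differentiableOn_dirichletEta).analyticOnNhd hU
  have hg : AnalyticOnNhd ℂ (fun s ↦ (1 - 2 ^ (1 - s)) * riemannZeta₁ s) {s | 0 < s.re} :=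
    (Differentiable.differentiableOn (by fun_prop)).analyticOnNhd hU
  have heq : (fun s ↦ (s - 1) * dirichletEta s) =ᶠ[nhds 2]
      fun s ↦ (1 - 2 ^ (1 - s)) * riemannZeta₁ s := by
    filter_upwards [(isOpen_lt continuous_const continuous_re).mem_nhds
      (show (1 : ℝ) < (2 : ℂ).re by norm_num)] with z hz
    have hz1 : z ≠ 1 := by rintro rfl; norm_num at hz
    rw [dirichletEta_eq_of_one_lt_re hz, riemannZeta_eq_inv_sub_mul hz1]
    field_simp [sub_ne_zero.2 hz1]
  exact hf.eqOn_of_preconnected_of_eventuallyEq hg (convex_halfSpace_re_gt 0).isPreconnected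
    (by norm_num) heq hs

lemma dirichletEta_eq {s : ℂ} (hs : 0 < s.re) (hs1 : s ≠ 1) :
    dirichletEta s = (1 - 2 ^ (1 - s)) * riemannZeta s := by
  rw [riemannZeta_eq_inv_sub_mul hs1, mul_left_comm, ← sub_one_mul_dirichletEta hs,
    inv_mul_cancel_left₀ (sub_ne_zero.2 hs1)]

lemma re_etaTerm_ofReal (s : ℝ) (k : ℕ) :
    (etaTerm s k).re = ((2 * k + 1 : ℕ) : ℝ) ^ (-s) - ((2 * k + 2 : ℕ) : ℝ) ^ (-s) := by
  simp only [etaTerm, ← ofReal_neg, ← ofReal_natCast, ← ofReal_cpow (Nat.cast_nonneg _), sub_re,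
    ofReal_re]

lemma dirichletEta_ofReal_re_pos {s : ℝ} (hs : 0 < s) : 0 < (dirichletEta s).re := by
  have hsum := hasSum_re (summable_norm_etaTerm (s := s) (by simpa)).of_norm.hasSum
  rw [dirichletEta, ← hsum.tsum_eq]
  refine hsum.summable.tsum_pos (fun k ↦ ?_) 0 ?_ <;> rw [re_etaTerm_ofReal]
  · exact sub_nonneg.2 <| Real.rpow_le_rpow_of_nonpos (by positivity) (by simp) (by linarith)
  · norm_num
    exact Real.rpow_lt_one_of_one_lt_of_neg one_lt_two (by linarith)

lemma riemannZeta_ofReal_im (s : ℝ) : (riemannZeta s).im = 0 := by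
  rw [← conj_eq_iff_im, ← riemannZeta_conj, conj_ofReal]

theorem stmt18 (s : ℝ) (hs0 : 0 < s) (hs1 : s < 1) :
    (riemannZeta s).im = 0 ∧ (riemannZeta s).re < 0 := by
  refine ⟨riemannZeta_ofReal_im s, ?_⟩
  have hη := dirichletEta_eq (s := s) (by simpa) (by exact_mod_cast hs1.ne)
  have hc : (1 : ℂ) - 2 ^ (1 - (s : ℂ)) = ((1 - 2 ^ (1 - s) : ℝ) : ℂ) := by
    norm_num [ofReal_cpow zero_le_two]
  have hneg : 1 - (2 : ℝ) ^ (1 - s) < 0 := by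
    linarith [Real.one_lt_rpow one_lt_two (by linarith : 0 < 1 - s)]
  have hpos := dirichletEta_ofReal_re_pos hs0
  rw [hη, hc, re_ofReal_mul] at hpos
  exact neg_of_mul_pos_right hpos hneg.le
end

section
/- The value of the Riemann zeta function at 1/2 satisfies −3/2 + 1/(15√5) < ζ(1/2) < −35/24. -/
/-!
For `0 < re s` the alternating series `η(s) = ∑ (-1)ⁿ⁺¹ n⁻ˢ`, summed in pairs, is holomorphic and
equals `(1 - 2¹⁻ˢ) ζ(s)`: both sides agree for `re s > 1` with the Dirichlet series of the sign
pattern `(-1, 1)` on `ZMod 2`, whose L-function is entire because the signs sum to zero. At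
`s = 1/2` this gives `ζ(1/2) = -(1 + √2) η(1/2)` with `η(1/2) = ∑ (-1)ⁿ / √(n + 1)` real.

The third differences of `x ↦ 1/√x` are nonnegative, so for the tail `A(c) = ∑ₖ (u_{2k} - u_{2k+1})`
of `uₙ = 1/√(n + c)` the identity `A(c) + A(c + 1) = u₀` and the telescoping lower bound
`A(c) ≥ (3u₀ - u₁)/4` trap `A(c)` in an interval of length `O(c^{-5/2})`. Six explicit terms and
this estimate at `c = 7` give `0.6042 ≤ η(1/2) ≤ 0.606`, which suffices.
-/

open Complex Real

open Filter Topology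

namespace RiemannZetaOneHalf

section AltPairSum

noncomputable def altPairSum (u : ℕ → ℝ) : ℝ := ∑' k, (u (2 * k) - u (2 * k + 1))

variable {u : ℕ → ℝ}

lemma hasSum_sub_succ_of_antitone (hu : Antitone u) (hu0 : Tendsto u atTop (𝓝 0)) :
    HasSum (fun n ↦ u n - u (n + 1)) (u 0) := by
  rw [hasSum_iff_tendsto_nat_of_nonneg fun n ↦ sub_nonneg.mpr (hu n.le_succ)]
  simp_rw [Finset.sum_range_sub']
  simpa using tendsto_const_nhds.sub hu0

lemma summable_altPairSum (hu : Antitone u) (hu0 : Tendsto u atTop (𝓝 0)) :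
    Summable fun k ↦ u (2 * k) - u (2 * k + 1) := by
  have hv : Antitone fun k ↦ u (2 * k) := hu.comp_monotone fun a b h ↦ by omega
  refine .of_nonneg_of_le (fun k ↦ sub_nonneg.mpr (hu (by omega))) (fun k ↦ ?_)
    (hasSum_sub_succ_of_antitone hv (hu0.comp (tendsto_id.const_mul_atTop' two_pos))).summable
  exact sub_le_sub_left (hu (by omega)) _

lemma altPairSum_add_altPairSum_succ (hu : Antitone u) (hu0 : Tendsto u atTop (𝓝 0)) :
    altPairSum u + altPairSum (fun n ↦ u (n + 1)) = u 0 := by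
  have hv : Antitone fun k ↦ u (2 * k) := hu.comp_monotone fun a b h ↦ by omega
  have hsucc : Summable fun k ↦ u (2 * k + 1) - u (2 * k + 1 + 1) :=
    summable_altPairSum (u := fun n ↦ u (n + 1)) (hu.comp_monotone fun a b h ↦ by omega)
      (hu0.comp (tendsto_add_atTop_nat 1))
  rw [altPairSum, altPairSum, ← (summable_altPairSum hu hu0).tsum_add hsucc]
  convert (hasSum_sub_succ_of_antitone hv
    (hu0.comp (tendsto_id.const_mul_atTop' two_pos))).tsum_eq using 3 with k
  ring_nf

lemma altPairSum_eq_sum_add (hu : Antitone u) (hu0 : Tendsto u atTop (𝓝 0)) (m : ℕ) :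
    altPairSum u = ∑ k ∈ Finset.range m, (u (2 * k) - u (2 * k + 1)) +
      altPairSum (fun n ↦ u (n + 2 * m)) := by
  rw [altPairSum, ← (summable_altPairSum hu hu0).sum_add_tsum_nat_add m, altPairSum]
  congr 2 with k
  ring_nf

lemma le_altPairSum (hu : Antitone u) (hu0 : Tendsto u atTop (𝓝 0))
    (hu3 : ∀ n, 0 ≤ u n - 3 * u (n + 1) + 3 * u (n + 2) - u (n + 3)) :
    (3 * u 0 - u 1) / 4 ≤ altPairSum u := by
  -- each term exceeds `h k - h (k + 1)` by a quarter of a third difference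
  set h : ℕ → ℝ := fun k ↦ (3 * u (2 * k) - u (2 * k + 1)) / 4
  have hh : Tendsto h atTop (𝓝 0) := by
    have h2 : Tendsto (fun k : ℕ ↦ 2 * k) atTop atTop := tendsto_id.const_mul_atTop' two_pos
    simpa using ((hu0.comp h2).const_mul 3 |>.sub
      (hu0.comp (tendsto_add_atTop_nat 1 |>.comp h2))).div_const 4
  suffices h 0 ≤ altPairSum u by simpa [h] using this
  refine le_of_tendsto_of_tendsto' (by simpa using tendsto_const_nhds.sub hh)
    (summable_altPairSum hu hu0).hasSum.tendsto_sum_nat fun n ↦ ?_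
  rw [← Finset.sum_range_sub']
  refine Finset.sum_le_sum fun k _ ↦ ?_
  have := hu3 (2 * k)
  simp only [h]
  ring_nf at this ⊢
  linarith

lemma altPairSum_le (hu : Antitone u) (hu0 : Tendsto u atTop (𝓝 0))
    (hu3 : ∀ n, 0 ≤ u n - 3 * u (n + 1) + 3 * u (n + 2) - u (n + 3)) :
    altPairSum u ≤ u 0 - (3 * u 1 - u 2) / 4 := by
  have := le_altPairSum (u := fun n ↦ u (n + 1)) (hu.comp_monotone fun a b h ↦ by omega)
    (hu0.comp (tendsto_add_atTop_nat 1)) fun n ↦ by have := hu3 (n + 1); ring_nf at this ⊢; linarith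
  linarith [altPairSum_add_altPairSum_succ hu hu0]

end AltPairSum

lemma inv_sqrt_sub_inv_sqrt_add {a d : ℝ} (ha : 0 < a) (hd : 0 < d) :
    (√a)⁻¹ - (√(a + d))⁻¹ = d / (√a * √(a + d) * (√a + √(a + d))) := by
  have hp := Real.sqrt_pos.mpr ha
  have hs := Real.sqrt_pos.mpr (add_pos ha hd)
  have hp2 := Real.sq_sqrt ha.le
  have hs2 := Real.sq_sqrt (add_pos ha hd).le
  field_simp
  linear_combination hs2 - hp2

/-- With `p, q, r, s` the square roots of `a, …, a + 3`, this is `ps(p + s) ≤ qr(q + r)`. -/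
lemma inv_sqrt_third_diff_nonneg {a : ℝ} (ha : 0 < a) :
    0 ≤ (√a)⁻¹ - 3 * (√(a + 1))⁻¹ + 3 * (√(a + 2))⁻¹ - (√(a + 3))⁻¹ := by
  have e1 := inv_sqrt_sub_inv_sqrt_add ha three_pos
  have e2 := inv_sqrt_sub_inv_sqrt_add (a := a + 1) (by linarith) one_pos
  rw [show a + 1 + 1 = a + 2 by ring] at e2
  set p := √a; set q := √(a + 1); set r := √(a + 2); set s := √(a + 3)
  have hp : 0 < p := Real.sqrt_pos.mpr ha
  have hq : 0 < q := Real.sqrt_pos.mpr (by linarith)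
  have hps : p * s ≤ q * r := by
    simp only [p, q, r, s, ← Real.sqrt_mul ha.le, ← Real.sqrt_mul (by linarith : 0 ≤ a + 1)]
    exact Real.sqrt_le_sqrt (by nlinarith)
  have hsum : p + s ≤ q + r := by
    have : (p + s) ^ 2 ≤ (q + r) ^ 2 := by
      nlinarith [Real.sq_sqrt ha.le, Real.sq_sqrt (by linarith : 0 ≤ a + 1),
        Real.sq_sqrt (by linarith : 0 ≤ a + 2), Real.sq_sqrt (by linarith : 0 ≤ a + 3)]
    exact (pow_le_pow_iff_left₀ (by positivity) (by positivity) two_ne_zero).mp this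
  have key : 3 / (q * r * (q + r)) ≤ 3 / (p * s * (p + s)) :=
    div_le_div_of_nonneg_left (by norm_num) (by positivity)
      (mul_le_mul hps hsum (by positivity) (by positivity))
  calc 0 ≤ 3 / (p * s * (p + s)) - 3 * (1 / (q * r * (q + r))) := by
        rw [mul_one_div]; linarith
    _ = _ := by rw [← e1, ← e2]; ring

lemma antitone_inv_sqrt_add {c : ℝ} (hc : 0 < c) : Antitone fun n : ℕ ↦ (√(n + c))⁻¹ :=
  fun m n h ↦ inv_anti₀ (Real.sqrt_pos.mpr (by positivity))
    (Real.sqrt_le_sqrt (by gcongr))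

lemma tendsto_inv_sqrt_add (c : ℝ) : Tendsto (fun n : ℕ ↦ (√(n + c))⁻¹) atTop (𝓝 0) :=
  tendsto_inv_atTop_zero.comp <| Real.tendsto_sqrt_atTop.comp <|
    tendsto_atTop_add_const_right _ c tendsto_natCast_atTop_atTop

lemma altPairSum_inv_sqrt_add_mem_Icc {c : ℝ} (hc : 0 < c) :
    altPairSum (fun n : ℕ ↦ (√(n + c))⁻¹) ∈
      Set.Icc ((3 * (√c)⁻¹ - (√(c + 1))⁻¹) / 4)
        ((√c)⁻¹ - (3 * (√(c + 1))⁻¹ - (√(c + 2))⁻¹) / 4) := by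
  have hu3 (n : ℕ) : 0 ≤ (√(n + c))⁻¹ - 3 * (√(↑(n + 1) + c))⁻¹ + 3 * (√(↑(n + 2) + c))⁻¹
      - (√(↑(n + 3) + c))⁻¹ := by
    have := inv_sqrt_third_diff_nonneg (a := n + c) (by positivity)
    push_cast; ring_nf at this ⊢; exact this
  have hlo := le_altPairSum (antitone_inv_sqrt_add hc) (tendsto_inv_sqrt_add c) hu3
  have hhi := altPairSum_le (antitone_inv_sqrt_add hc) (tendsto_inv_sqrt_add c) hu3
  simp only [Nat.cast_zero, zero_add, Nat.cast_one, Nat.cast_ofNat, add_comm (1 : ℝ) c,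
    add_comm (2 : ℝ) c] at hlo hhi
  exact ⟨hlo, hhi⟩

lemma inv_le_inv_sqrt {x c : ℝ} (hx : 0 < x) (hc : 0 < c) (h : x ≤ c ^ 2) : c⁻¹ ≤ (√x)⁻¹ :=
  inv_anti₀ (Real.sqrt_pos.mpr hx) ((Real.sqrt_le_sqrt h).trans_eq (Real.sqrt_sq hc.le))

lemma inv_sqrt_le_inv {x c : ℝ} (hc : 0 < c) (h : c ^ 2 ≤ x) : (√x)⁻¹ ≤ c⁻¹ :=
  inv_anti₀ hc ((Real.sqrt_sq hc.le).symm.trans_le (Real.sqrt_le_sqrt h))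

lemma altPairSum_inv_sqrt_succ_mem_Icc :
    altPairSum (fun n : ℕ ↦ (√(n + 1))⁻¹) ∈ Set.Icc (0.6042 : ℝ) 0.606 := by
  have hsplit := altPairSum_eq_sum_add (antitone_inv_sqrt_add one_pos) (tendsto_inv_sqrt_add 1) 3
  have htail : (fun n : ℕ ↦ (√(↑(n + 2 * 3) + 1 : ℝ))⁻¹) = fun n : ℕ ↦ (√(n + 7))⁻¹ := by
    ext n; push_cast; ring_nf
  rw [htail] at hsplit
  obtain ⟨hlo, hhi⟩ := altPairSum_inv_sqrt_add_mem_Icc (c := 7) (by norm_num)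
  simp only [Finset.sum_range_succ, Finset.sum_range_zero] at hsplit
  norm_num at hsplit hlo hhi
  have h2 := inv_le_inv_sqrt (x := 2) (c := 1.41422) (by norm_num) (by norm_num) (by norm_num)
  have h2' := inv_sqrt_le_inv (x := 2) (c := 1.41421) (by norm_num) (by norm_num)
  have h3 := inv_le_inv_sqrt (x := 3) (c := 1.73206) (by norm_num) (by norm_num) (by norm_num)
  have h3' := inv_sqrt_le_inv (x := 3) (c := 1.73205) (by norm_num) (by norm_num)
  have h5 := inv_le_inv_sqrt (x := 5) (c := 2.23607) (by norm_num) (by norm_num) (by norm_num)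
  have h5' := inv_sqrt_le_inv (x := 5) (c := 2.23606) (by norm_num) (by norm_num)
  have h6 := inv_le_inv_sqrt (x := 6) (c := 2.44949) (by norm_num) (by norm_num) (by norm_num)
  have h6' := inv_sqrt_le_inv (x := 6) (c := 2.44948) (by norm_num) (by norm_num)
  have h7 := inv_le_inv_sqrt (x := 7) (c := 2.64576) (by norm_num) (by norm_num) (by norm_num)
  have h7' := inv_sqrt_le_inv (x := 7) (c := 2.64575) (by norm_num) (by norm_num)
  have h8 := inv_le_inv_sqrt (x := 8) (c := 2.82843) (by norm_num) (by norm_num) (by norm_num)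
  have h8' := inv_sqrt_le_inv (x := 8) (c := 2.82842) (by norm_num) (by norm_num)
  exact ⟨by linarith, by linarith⟩

lemma norm_ofReal_cpow_neg_sub_le {s : ℂ} (hs : -1 ≤ s.re) {a b : ℝ} (ha : 0 < a)
    (hab : a ≤ b) :
    ‖(b : ℂ) ^ (-s) - (a : ℂ) ^ (-s)‖ ≤ ‖s‖ * a ^ (-(s.re + 1)) * (b - a) := by
  have hderiv (x : ℝ) (hx : x ∈ Set.Icc a b) :
      HasDerivWithinAt (fun y : ℝ ↦ (y : ℂ) ^ (-s)) (-s * (x : ℂ) ^ (-s - 1)) (Set.Icc a b) x := by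
    have h0 : (x : ℂ) ∈ slitPlane := ofReal_mem_slitPlane.mpr (ha.trans_le hx.1)
    simpa using ((hasDerivAt_id (x : ℂ)).cpow_const (c := -s) h0).comp_ofReal.hasDerivWithinAt
  have hbound (x : ℝ) (hx : x ∈ Set.Icc a b) :
      ‖-s * (x : ℂ) ^ (-s - 1)‖ ≤ ‖s‖ * a ^ (-(s.re + 1)) := by
    have hre : (-s - 1).re = -(s.re + 1) := by simp only [sub_re, neg_re, one_re]; ring
    rw [norm_mul, norm_neg, norm_cpow_eq_rpow_re_of_pos (ha.trans_le hx.1), hre]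
    exact mul_le_mul_of_nonneg_left (Real.rpow_le_rpow_of_nonpos ha hx.1 (by linarith))
      (norm_nonneg s)
  simpa [abs_of_nonneg (sub_nonneg.mpr hab)] using
    (convex_Icc a b).norm_image_sub_le_of_norm_hasDerivWithin_le
    hderiv hbound (Set.left_mem_Icc.mpr hab) (Set.right_mem_Icc.mpr hab)

/-- The Dirichlet eta function `∑ (-1)ⁿ⁺¹ n⁻ˢ`, with consecutive terms grouped so that the series
converges absolutely for `0 < re s`. -/
noncomputable def dirichletEta (s : ℂ) : ℂ :=
  ∑' k : ℕ, ((2 * k + 1 : ℂ) ^ (-s) - (2 * k + 2 : ℂ) ^ (-s))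

lemma differentiableOn_dirichletEta_of_re_gt {δ R : ℝ} (hδ : 0 < δ) :
    DifferentiableOn ℂ dirichletEta {w | δ < w.re ∧ ‖w‖ < R} := by
  have hu : Summable fun k : ℕ ↦ R * ((k : ℝ) + 1) ^ (-(δ + 1)) := by
    refine ((Real.summable_one_div_nat_add_rpow 1 (δ + 1)).mpr (by linarith)).mul_left R |>.congr
      fun k ↦ ?_
    rw [abs_of_pos (by positivity), Real.rpow_neg (by positivity), one_div]
  refine differentiableOn_tsum_of_summable_norm hu (fun k ↦ ?_) ?_ fun k w hw ↦ ?_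
  · have h1 : (2 * k + 1 : ℂ) ≠ 0 := by norm_cast
    have h2 : (2 * k + 2 : ℂ) ≠ 0 := by norm_cast
    exact ((differentiable_neg.const_cpow (Or.inl h1)).sub
      (differentiable_neg.const_cpow (Or.inl h2))).differentiableOn
  · exact (isOpen_lt continuous_const continuous_re).inter
      (isOpen_lt continuous_norm continuous_const)
  · have hk : (1 : ℝ) ≤ k + 1 := by simp
    have := norm_ofReal_cpow_neg_sub_le (s := w) (by linarith [hw.1]) (a := 2 * k + 1)
      (b := 2 * k + 2) (by positivity) (by linarith)
    push_cast at this
    rw [norm_sub_rev]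
    calc _ ≤ ‖w‖ * (2 * (k : ℝ) + 1) ^ (-(w.re + 1)) * (2 * k + 2 - (2 * k + 1)) := this
      _ = ‖w‖ * (2 * (k : ℝ) + 1) ^ (-(w.re + 1)) := by ring
      _ ≤ R * ((k : ℝ) + 1) ^ (-(δ + 1)) := by
        refine mul_le_mul hw.2.le ?_ (by positivity) ((norm_nonneg w).trans hw.2.le)
        calc (2 * (k : ℝ) + 1) ^ (-(w.re + 1)) ≤ ((k : ℝ) + 1) ^ (-(w.re + 1)) :=
              Real.rpow_le_rpow_of_nonpos (by positivity) (by linarith) (by linarith [hw.1])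
          _ ≤ ((k : ℝ) + 1) ^ (-(δ + 1)) :=
              Real.rpow_le_rpow_of_exponent_le hk (by linarith [hw.1])

lemma differentiableOn_dirichletEta : DifferentiableOn ℂ dirichletEta {s | 0 < s.re} := by
  intro s hs
  have hs' : s ∈ {w : ℂ | s.re / 2 < w.re ∧ ‖w‖ < ‖s‖ + 1} := ⟨half_lt_self hs, lt_add_one _⟩
  refine ((differentiableOn_dirichletEta_of_re_gt (R := ‖s‖ + 1) (half_pos hs)).differentiableAt
    ?_).differentiableWithinAt
  exact ((isOpen_lt continuous_const continuous_re).inter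
    (isOpen_lt continuous_norm continuous_const)).mem_nhds hs'

lemma tsum_eq_tsum_odd_add_tsum_even_succ {E : Type*} [NormedAddCommGroup E] [CompleteSpace E]
    {f : ℕ → E} (hf : Summable f) (h0 : f 0 = 0) :
    ∑' n, f n = ∑' k, f (2 * k + 1) + ∑' k, f (2 * k + 2) := by
  have heven : Summable fun k ↦ f (2 * k) := hf.comp_injective fun a b h ↦ by omega
  rw [← tsum_even_add_odd heven (hf.comp_injective fun a b h ↦ by omega), heven.tsum_eq_zero_add]
  simp only [mul_zero, h0, zero_add, mul_add, mul_one]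
  exact add_comm _ _

/-- `n ↦ altSign n` is `n ↦ (-1) ^ (n + 1)`. -/
def altSign : ZMod 2 → ℂ := fun j ↦ if j = 0 then -1 else 1

section OneLtRe

variable {s : ℂ} (hs : 1 < s.re)
include hs

lemma summable_natCast_cpow_neg : Summable fun n : ℕ ↦ (n : ℂ) ^ (-s) := by
  simpa [cpow_neg] using summable_one_div_nat_cpow.mpr hs

lemma riemannZeta_eq_tsum_natCast_cpow_neg : riemannZeta s = ∑' n : ℕ, (n : ℂ) ^ (-s) := by
  simp [zeta_eq_tsum_one_div_nat_cpow hs, cpow_neg]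

lemma natCast_cpow_neg_zero : ((0 : ℕ) : ℂ) ^ (-s) = 0 := by
  rw [Nat.cast_zero, zero_cpow (neg_ne_zero.mpr (ne_zero_of_one_lt_re hs))]

lemma tsum_even_succ_cpow_neg : ∑' k : ℕ, (2 * k + 2 : ℂ) ^ (-s) = 2 ^ (-s) * riemannZeta s := by
  have h (k : ℕ) : (2 * k + 2 : ℂ) ^ (-s) = 2 ^ (-s) * ((k + 1 : ℕ) : ℂ) ^ (-s) := by
    rw [show (2 * k + 2 : ℂ) = ((2 : ℕ) : ℂ) * ((k + 1 : ℕ) : ℂ) by push_cast; ring,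
      natCast_mul_natCast_cpow, Nat.cast_ofNat]
  rw [tsum_congr h, tsum_mul_left, riemannZeta_eq_tsum_natCast_cpow_neg hs,
    (summable_natCast_cpow_neg hs).tsum_eq_zero_add, natCast_cpow_neg_zero hs, zero_add]

lemma summable_odd_cpow_neg : Summable fun k : ℕ ↦ (2 * k + 1 : ℂ) ^ (-s) := by
  have := (summable_natCast_cpow_neg hs).comp_injective (i := fun k ↦ 2 * k + 1)
    fun a b h ↦ by simp only at h; omega
  exact this.congr fun k ↦ by simp

lemma summable_even_succ_cpow_neg : Summable fun k : ℕ ↦ (2 * k + 2 : ℂ) ^ (-s) := by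
  have := (summable_natCast_cpow_neg hs).comp_injective (i := fun k ↦ 2 * k + 2)
    fun a b h ↦ by simp only at h; omega
  exact this.congr fun k ↦ by simp

lemma dirichletEta_eq_of_one_lt_re : dirichletEta s = (1 - 2 ^ (1 - s)) * riemannZeta s := by
  have hsplit := tsum_eq_tsum_odd_add_tsum_even_succ (summable_natCast_cpow_neg hs)
    (natCast_cpow_neg_zero hs)
  rw [← riemannZeta_eq_tsum_natCast_cpow_neg hs] at hsplit
  push_cast at hsplit
  rw [dirichletEta, (summable_odd_cpow_neg hs).tsum_sub (summable_even_succ_cpow_neg hs),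
    tsum_even_succ_cpow_neg hs, sub_eq_add_neg (1 : ℂ) s, cpow_add _ _ two_ne_zero, cpow_one]
  rw [tsum_even_succ_cpow_neg hs] at hsplit
  linear_combination -hsplit

lemma LSeries_altSign_eq_dirichletEta : LSeries (fun n ↦ altSign n) s = dirichletEta s := by
  have hodd (k : ℕ) :
      LSeries.term (fun n ↦ altSign n) s (2 * k + 1) = (2 * k + 1 : ℂ) ^ (-s) := by
    rw [LSeries.term_of_ne_zero (by omega), altSign,
      if_neg (by rw [ZMod.natCast_eq_zero_iff_even]; exact Nat.not_even_two_mul_add_one k)]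
    push_cast
    rw [cpow_neg, one_div]
  have heven (k : ℕ) :
      LSeries.term (fun n ↦ altSign n) s (2 * k + 2) = -(2 * k + 2 : ℂ) ^ (-s) := by
    rw [LSeries.term_of_ne_zero (by omega), altSign,
      if_pos (by rw [ZMod.natCast_eq_zero_iff_even]; exact ⟨k + 1, by ring⟩)]
    push_cast
    rw [cpow_neg, neg_div, one_div]
  rw [LSeries, tsum_eq_tsum_odd_add_tsum_even_succ (ZMod.LSeriesSummable_of_one_lt_re altSign hs)
    (LSeries.term_zero _ _), tsum_congr hodd, tsum_congr heven, tsum_neg, ← sub_eq_add_neg,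
    dirichletEta, (summable_odd_cpow_neg hs).tsum_sub (summable_even_succ_cpow_neg hs)]

end OneLtRe

lemma eqOn_of_eq_of_one_lt_re {f g : ℂ → ℂ} {U : Set ℂ} (hU : IsOpen U) (hUc : IsPreconnected U)
    {z₀ : ℂ} (hz₀ : z₀ ∈ U) (hz₀' : 1 < z₀.re) (hf : DifferentiableOn ℂ f U)
    (hg : DifferentiableOn ℂ g U) (hfg : ∀ s, 1 < s.re → f s = g s) : Set.EqOn f g U :=
  (hf.analyticOnNhd hU).eqOn_of_preconnected_of_eventuallyEq (hg.analyticOnNhd hU) hUc hz₀ <|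
    eventually_of_mem ((isOpen_lt continuous_const continuous_re).mem_nhds hz₀') hfg

lemma sum_altSign : ∑ j, altSign j = 0 := by
  rw [show (Finset.univ : Finset (ZMod 2)) = {0, 1} from rfl]
  norm_num [altSign]

lemma LFunction_altSign_eq {s : ℂ} (hs : s ≠ 1) :
    ZMod.LFunction altSign s = (1 - 2 ^ (1 - s)) * riemannZeta s := by
  refine eqOn_of_eq_of_one_lt_re (g := fun s ↦ (1 - 2 ^ (1 - s)) * riemannZeta s)
    isOpen_compl_singleton
    (isConnected_compl_singleton_of_one_lt_rank (by simp) 1).isPreconnected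
    (z₀ := 2) (by norm_num) (by norm_num)
    (ZMod.differentiable_LFunction_of_sum_zero sum_altSign).differentiableOn ?_ (fun s hs ↦ ?_) hs
  · exact fun s hs ↦ (((differentiableAt_id.const_sub 1).const_cpow (Or.inl two_ne_zero)).const_sub
      1 |>.mul (differentiableAt_riemannZeta hs)).differentiableWithinAt
  · rw [ZMod.LFunction_eq_LSeries _ hs, LSeries_altSign_eq_dirichletEta hs,
      dirichletEta_eq_of_one_lt_re hs]

lemma LFunction_altSign_eq_dirichletEta {s : ℂ} (hs : 0 < s.re) :
    ZMod.LFunction altSign s = dirichletEta s :=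
  eqOn_of_eq_of_one_lt_re (isOpen_lt continuous_const continuous_re)
    (convex_halfSpace_re_gt 0).isPreconnected (z₀ := 2) (by norm_num) (by norm_num)
    (ZMod.differentiable_LFunction_of_sum_zero sum_altSign).differentiableOn
    differentiableOn_dirichletEta
    (fun s hs ↦ by rw [ZMod.LFunction_eq_LSeries _ hs, LSeries_altSign_eq_dirichletEta hs]) hs

lemma ofReal_inv_sqrt {x : ℝ} (hx : 0 ≤ x) : (((√x)⁻¹ : ℝ) : ℂ) = (x : ℂ) ^ (-(1 / 2 : ℂ)) := by
  rw [Real.sqrt_eq_rpow, ← Real.rpow_neg hx, ofReal_cpow hx]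
  push_cast; ring_nf

lemma dirichletEta_one_half :
    dirichletEta (1 / 2) = (altPairSum (fun n : ℕ ↦ (√(n + 1))⁻¹) : ℂ) := by
  rw [dirichletEta, altPairSum, ofReal_tsum]
  congr 1 with k
  rw [ofReal_sub, ofReal_inv_sqrt (by positivity), ofReal_inv_sqrt (by positivity)]
  push_cast; ring_nf

lemma riemannZeta_one_half :
    riemannZeta (1 / 2) = ((-(1 + √2) * altPairSum (fun n : ℕ ↦ (√(n + 1))⁻¹) : ℝ) : ℂ) := by
  have hη := (LFunction_altSign_eq (s := 1 / 2) (by norm_num)).symm.trans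
    (LFunction_altSign_eq_dirichletEta (by norm_num))
  have h2 : (2 : ℂ) ^ (1 - 1 / 2 : ℂ) = (√2 : ℝ) := by
    rw [Real.sqrt_eq_rpow, ofReal_cpow (by norm_num)]; norm_num
  have hr : ((√2 : ℝ) : ℂ) ^ 2 = 2 := by
    rw [← ofReal_pow, Real.sq_sqrt (by norm_num)]; norm_num
  rw [h2, dirichletEta_one_half] at hη
  push_cast
  linear_combination -(1 + (√2 : ℂ)) * hη - riemannZeta (1 / 2) * hr

end RiemannZetaOneHalf

open RiemannZetaOneHalf

theorem stmt19 :
    (riemannZeta (1 / 2)).im = 0 ∧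
    -3 / 2 + 1 / (15 * Real.sqrt 5) < (riemannZeta (1 / 2)).re ∧
    (riemannZeta (1 / 2)).re < -35 / 24 := by
  obtain ⟨hlo, hhi⟩ := altPairSum_inv_sqrt_succ_mem_Icc
  have h2 : (1.41421 : ℝ) ≤ √2 := Real.le_sqrt_of_sq_le (by norm_num)
  have h2' : √2 ≤ 1.41422 := Real.sqrt_le_iff.mpr ⟨by norm_num, by norm_num⟩
  have h5 : (2.236 : ℝ) ≤ √5 := Real.le_sqrt_of_sq_le (by norm_num)
  have h5' : 1 / (15 * √5) ≤ 1 / (15 * 2.236) :=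
    one_div_le_one_div_of_le (by norm_num) (by linarith)
  rw [riemannZeta_one_half, ofReal_im, ofReal_re]
  refine ⟨rfl, ?_, ?_⟩
  · nlinarith [mul_le_mul h2' hhi (by linarith) (by norm_num)]
  · nlinarith [mul_le_mul h2 hlo (by norm_num) (by linarith)]
end
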